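/- Let R be a von Neumann algebra acting on a complex Hilbert space, let τ be a normal tracial state on R, let H be a positive element of R, and let ε > 0 be such that τ(H) ≤ ε. Then there exists a projection E in R such that ‖HE‖ ≤ √ε and τ(1−E) ≤ √ε; that is, H ∈ O(τ, √ε, √ε). -/

import Mathlib

open ContinuousLinearMap
open scoped ComplexOrder

namespace Paper

variable {H : Type*} [NormedAddCommGroup H] [InnerProductSpace ℂ H] [CompleteSpace H]

/-- The Loewner order on bounded operators: `loe A B` iff `B - A` is a positive operator. -/
def loe (A B : H →L[ℂ] H) : Prop := (B - A).IsPositive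

/-- A projection in the von Neumann algebra `R`: a self-adjoint idempotent member of `R`. -/
def IsProjectionIn (R : VonNeumannAlgebra H) (E : H →L[ℂ] H) : Prop :=
  E ∈ R ∧ star E = E ∧ E * E = E

/-- A tracial state on `R`, given as a complex-valued function on bounded operators whose
state axioms are imposed on members of `R`. -/
structure IsTracialState (R : VonNeumannAlgebra H) (τ : (H →L[ℂ] H) → ℂ) : Prop where
  map_add : ∀ A B, A ∈ R → B ∈ R → τ (A + B) = τ A + τ B
  map_smul : ∀ (c : ℂ) (A), A ∈ R → τ (c • A) = c * τ A
  map_one : τ 1 = 1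
  nonneg : ∀ A, A ∈ R → 0 ≤ τ (star A * A)
  tracial : ∀ A B, A ∈ R → B ∈ R → τ (A * B) = τ (B * A)

/-- Normality of a functional `τ` on `R`: for every increasing net of projections in `R`
possessing a least upper bound in `R` for the Loewner order, `τ` of the least upper bound is
the supremum of the values of `τ` along the net. -/
def IsNormalOn (R : VonNeumannAlgebra H) (τ : (H →L[ℂ] H) → ℂ) : Prop :=
  ∀ (ι : Type) [Preorder ι] [IsDirected ι (· ≤ ·)] [Nonempty ι],
    ∀ (E : ι → H →L[ℂ] H) (Elub : H →L[ℂ] H),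
      (∀ i, IsProjectionIn R (E i)) →
      (∀ i j, i ≤ j → loe (E i) (E j)) →
      Elub ∈ R →
      (∀ i, loe (E i) Elub) →
      (∀ F, F ∈ R → (∀ i, loe (E i) F) → loe Elub F) →
      IsLUB (Set.range fun i => (τ (E i)).re) (τ Elub).re

/-- A normal tracial state on `R`. -/
def IsNormalTracialState (R : VonNeumannAlgebra H) (τ : (H →L[ℂ] H) → ℂ) : Prop :=
  IsTracialState R τ ∧ IsNormalOn R τ

/-- Faithfulness of a state on `R`. -/
def IsFaithfulOn (R : VonNeumannAlgebra H) (τ : (H →L[ℂ] H) → ℂ) : Prop :=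
  ∀ A, A ∈ R → τ (star A * A) = 0 → A = 0

/-- The neighborhood `O(τ, ε, δ)` of `0` in `R` for the measure topology. -/
def O (R : VonNeumannAlgebra H) (τ : (H →L[ℂ] H) → ℂ) (ε δ : ℝ) : Set (H →L[ℂ] H) :=
  {A | A ∈ R ∧ ∃ E, IsProjectionIn R E ∧ ‖A * E‖ ≤ ε ∧ τ (1 - E) ≤ (δ : ℂ)}

/-- The neighborhood `V(τ, ε, δ)` of `0` in `H` for the measure topology. -/
def V (R : VonNeumannAlgebra H) (τ : (H →L[ℂ] H) → ℂ) (ε δ : ℝ) : Set H :=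
  {x | ∃ E, IsProjectionIn R E ∧ ‖E x‖ ≤ ε ∧ τ (1 - E) ≤ (δ : ℂ)}

/-- The normal tracial states of `R` separate points: every nonzero positive element of `R`
is detected by some normal tracial state. -/
def SeparatingNormalTracialStates (R : VonNeumannAlgebra H) : Prop :=
  ∀ A : H →L[ℂ] H, A ∈ R → A.IsPositive → A ≠ 0 →
    ∃ τ, IsNormalTracialState R τ ∧ τ A ≠ 0

/-!
Let `s = √ε` and let `E = χ_{(-∞, s]}(A)` be the spectral projection of `A` below `s`. Then
`‖A E‖ ≤ s`, and `s (1 - E) ≤ A` because `A ≥ s` on the range of `1 - E` while `A ≥ 0` on that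
of `E`. Taking traces, `s τ(1 - E) ≤ τ(A) ≤ ε = s²`, so `τ(1 - E) ≤ s`.
-/

lemma _root_.VonNeumannAlgebra.cfc_mem (R : VonNeumannAlgebra H) {A : H →L[ℂ] H} (hA : A ∈ R)
    (f : ℝ → ℝ) : cfc f A ∈ R := by
  have : IsClosed (R.toStarSubalgebra : Set (H →L[ℂ] H)) := by
    rw [R.coe_toStarSubalgebra, ← R.centralizer_centralizer]
    exact Set.isClosed_centralizer _
  exact _root_.cfc_mem (s := R.toStarSubalgebra) f hA

section KernelProjection

omit [CompleteSpace H] in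
lemma ker_mem_invtSubmodule_of_commute {B T : H →L[ℂ] H} (h : Commute T B) :
    B.ker ∈ Module.End.invtSubmodule (T : H →ₗ[ℂ] H) := by
  intro x (hx : B x = 0)
  change B (T x) = 0
  rw [← mul_apply_eq_comp, ← h.eq, mul_apply_eq_comp, hx, map_zero]

lemma commute_starProjection_ker {B T : H →L[ℂ] H} (hT : Commute T B)
    (hT' : Commute (star T) B) : Commute B.ker.starProjection T := by
  rw [B.ker.isIdempotentElem_starProjection.commute_iff, Submodule.range_starProjection,
    Submodule.ker_starProjection]
  exact ⟨ker_mem_invtSubmodule_of_commute hT,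
    ContinuousLinearMap.orthogonal_mem_invtSubmodule (ker_mem_invtSubmodule_of_commute hT')⟩

lemma starProjection_ker_mem (R : VonNeumannAlgebra H) {B : H →L[ℂ] H} (hB : B ∈ R) :
    B.ker.starProjection ∈ R := by
  rw [VonNeumannAlgebra.IsStarProjection.mem_iff isStarProjection_starProjection]
  intro T hT
  rw [Submodule.range_starProjection]
  exact ker_mem_invtSubmodule_of_commute ((VonNeumannAlgebra.mem_commutant_iff.mp hT B hB).symm)

lemma mul_starProjection_ker (B : H →L[ℂ] H) : B * B.ker.starProjection = 0 := by
  ext x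
  exact B.ker.starProjection_apply_mem x

lemma starProjection_ker_mul_of_mul_eq_zero {B N : H →L[ℂ] H} (h : B * N = 0) :
    B.ker.starProjection * N = N := by
  ext x
  exact Submodule.starProjection_eq_self_iff.mpr (show B (N x) = 0 by
    rw [← mul_apply_eq_comp, h, zero_apply])

end KernelProjection

section SpectralProjection

/-- `χ_{(-∞, s]}(A)`, realized without Borel functional calculus as the projection onto
`ker (A - s)₊`. -/
noncomputable def spectralProjectionIic (A : H →L[ℂ] H) (s : ℝ) : H →L[ℂ] H :=
  (cfc (fun t : ℝ => max (t - s) 0) A).ker.starProjection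

variable {A : H →L[ℂ] H} {s : ℝ}

lemma isStarProjection_spectralProjectionIic : IsStarProjection (spectralProjectionIic A s) :=
  isStarProjection_starProjection

lemma spectralProjectionIic_mem (R : VonNeumannAlgebra H) (hA : A ∈ R) (s : ℝ) :
    spectralProjectionIic A s ∈ R :=
  starProjection_ker_mem R (R.cfc_mem hA _)

lemma norm_mul_spectralProjectionIic_le (hA : 0 ≤ A) (hs : 0 ≤ s) :
    ‖A * spectralProjectionIic A s‖ ≤ s := by
  set B := cfc (fun t : ℝ => max (t - s) 0) A
  have hAB : A * spectralProjectionIic A s = (A - B) * spectralProjectionIic A s := by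
    rw [sub_mul, spectralProjectionIic, mul_starProjection_ker, sub_zero]
  have hAB_norm : ‖A - B‖ ≤ s := by
    rw [show A - B = cfc (fun t : ℝ => t - max (t - s) 0) A by rw [cfc_sub .., cfc_id' ℝ A]]
    refine norm_cfc_le hs fun t ht => ?_
    have ht0 : 0 ≤ t := spectrum_nonneg_of_nonneg hA ht
    rw [Real.norm_eq_abs, abs_le]
    constructor <;> cases max_cases (t - s) 0 <;> linarith
  calc ‖A * spectralProjectionIic A s‖ ≤ ‖A - B‖ * ‖spectralProjectionIic A s‖ := by
        rw [hAB]; exact norm_mul_le _ _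
    _ ≤ s * 1 := mul_le_mul hAB_norm (Submodule.starProjection_norm_le _) (norm_nonneg _) hs
    _ = s := mul_one s

lemma commute_cfc_self (hA : IsSelfAdjoint A) (f : ℝ → ℝ) : Commute A (cfc f A) := by
  simpa only [cfc_id' ℝ A] using cfc_commute_cfc (fun t => t) f A

lemma sub_algebraMap_eq_cfc_sub_cfc (hA : IsSelfAdjoint A) (s : ℝ) :
    A - algebraMap ℝ _ s =
      cfc (fun t : ℝ => max (t - s) 0) A - cfc (fun t : ℝ => max (s - t) 0) A := by
  have hsplit (t : ℝ) : max (t - s) 0 - max (s - t) 0 = t - s := by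
    cases max_cases (t - s) 0 <;> cases max_cases (s - t) 0 <;> linarith
  rw [← cfc_sub .., funext hsplit, cfc_sub (fun t => t) (fun _ => s) A, cfc_id' ℝ A,
    cfc_const s A]

lemma cfc_posPart_mul_cfc_negPart (A : H →L[ℂ] H) (s : ℝ) :
    cfc (fun t : ℝ => max (t - s) 0) A * cfc (fun t : ℝ => max (s - t) 0) A = 0 := by
  rw [← cfc_mul (fun t : ℝ => max (t - s) 0) (fun t : ℝ => max (s - t) 0) A, ← cfc_zero ℝ A]
  refine cfc_congr fun t _ => ?_
  rcases le_total t s with h | h <;> simp [sub_nonpos.2 h]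

lemma smul_one_sub_spectralProjectionIic_le (hA : 0 ≤ A) (s : ℝ) :
    s • (1 - spectralProjectionIic A s) ≤ A := by
  set B := cfc (fun t : ℝ => max (t - s) 0) A
  set N := cfc (fun t : ℝ => max (s - t) 0) A
  set E := spectralProjectionIic A s
  have hBE : B * E = 0 := mul_starProjection_ker B
  have hNE : N * E = N := by
    have := congr(star $(starProjection_ker_mul_of_mul_eq_zero (cfc_posPart_mul_cfc_negPart A s)))
    rwa [star_mul, (cfc_predicate _ A : IsSelfAdjoint N).star_eq,
      (isSelfAdjoint_starProjection _).star_eq] at this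
  have hEAE : E * A * E = A * E := by
    have hAE : Commute E A := commute_starProjection_ker (commute_cfc_self hA.isSelfAdjoint _)
      (by rw [hA.isSelfAdjoint.star_eq]; exact commute_cfc_self hA.isSelfAdjoint _)
    rw [hAE.eq, mul_assoc, isStarProjection_spectralProjectionIic.isIdempotentElem.eq]
  have hdecomp : A - s • (1 - E) = E * A * E + B :=
    calc A - s • (1 - E) = (A - algebraMap ℝ _ s) * (1 - E) + A * E := by
          rw [Algebra.algebraMap_eq_smul_one, sub_mul, mul_sub, mul_sub, mul_one, smul_one_mul,
            smul_sub]
          abel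
      _ = (B - N) * (1 - E) + A * E := by rw [sub_algebraMap_eq_cfc_sub_cfc hA.isSelfAdjoint]
      _ = E * A * E + B := by
          rw [hEAE, sub_mul, mul_sub, mul_sub, mul_one, mul_one, hBE, hNE]
          abel
  have hEAE_nonneg : 0 ≤ E * A * E := by
    have hE : star E = E := isStarProjection_spectralProjectionIic.isSelfAdjoint.star_eq
    simpa only [hE] using star_left_conjugate_nonneg hA E
  rw [← sub_nonneg, hdecomp]
  exact add_nonneg hEAE_nonneg (cfc_nonneg fun t _ => le_max_right _ _)

end SpectralProjection

namespace IsTracialState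

variable {R : VonNeumannAlgebra H} {τ : (H →L[ℂ] H) → ℂ}

lemma map_nonneg (hτ : IsTracialState R τ) {P : H →L[ℂ] H} (hPR : P ∈ R) (hP : 0 ≤ P) :
    0 ≤ τ P := by
  have hsqrt : CFC.sqrt P ∈ R := by
    rw [CFC.sqrt_eq_real_sqrt P, cfcₙ_eq_cfc]
    exact R.cfc_mem hPR _
  simpa only [(CFC.sqrt_nonneg P).isSelfAdjoint.star_eq, CFC.sqrt_mul_sqrt_self P] using
    hτ.nonneg _ hsqrt

lemma mono (hτ : IsTracialState R τ) {P Q : H →L[ℂ] H} (hPR : P ∈ R) (hQR : Q ∈ R)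
    (hPQ : P ≤ Q) : τ P ≤ τ Q := by
  have hadd := hτ.map_add (Q - P) P (sub_mem hQR hPR) hPR
  rw [sub_add_cancel] at hadd
  rw [hadd]
  exact le_add_of_nonneg_left (hτ.map_nonneg (sub_mem hQR hPR) (sub_nonneg.2 hPQ))

end IsTracialState

/-- A positive operator of small trace is in a small basic neighborhood:
if `τ(A) ≤ ε` then `A ∈ O(τ, √ε, √ε)`. -/
theorem statement13 (R : VonNeumannAlgebra H) (τ : (H →L[ℂ] H) → ℂ)
    (hτ : IsNormalTracialState R τ) (A : H →L[ℂ] H) (hAR : A ∈ R)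
    (hA : A.IsPositive) (ε : ℝ) (hε : 0 < ε) (hτA : τ A ≤ (ε : ℂ)) :
    A ∈ O R τ (Real.sqrt ε) (Real.sqrt ε) := by
  have hA0 : 0 ≤ A := (nonneg_iff_isPositive A).mpr hA
  set s := Real.sqrt ε
  set E := spectralProjectionIic A s
  have hER : E ∈ R := spectralProjectionIic_mem R hAR s
  have hE : IsStarProjection E := isStarProjection_spectralProjectionIic
  refine ⟨hAR, E, ⟨hER, hE.isSelfAdjoint.star_eq, hE.isIdempotentElem.eq⟩,
    norm_mul_spectralProjectionIic_le hA0 (Real.sqrt_nonneg ε), ?_⟩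
  have hsub : 1 - E ∈ R := sub_mem (one_mem R) hER
  have key : (s : ℂ) * τ (1 - E) ≤ s * s :=
    calc (s : ℂ) * τ (1 - E) = τ (s • (1 - E)) := by
          rw [← Complex.coe_smul, hτ.1.map_smul _ _ hsub]
      _ ≤ τ A := hτ.1.mono (R.toStarSubalgebra.smul_mem hsub s) hAR
          (smul_one_sub_spectralProjectionIic_le hA0 s)
      _ ≤ ε := hτA
      _ = s * s := by exact_mod_cast (Real.mul_self_sqrt hε.le).symm
  exact le_of_mul_le_mul_left key (by exact_mod_cast Real.sqrt_pos.mpr hε)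

end Paper
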